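/- Let V be a module over the twisted N=1 Schrödinger-Neveu-Schwarz algebra and suppose v ∈ V satisfies L_{-1}v = Y_{-1}v = M_{-1}v = 0 and Y_p v = M_p v = 0 for all p ∈ (1/2)ℤ with p > 0. Then Y_p v = M_p v = 0 for all p ∈ (1/2)ℤ. -/
import Mathlib


noncomputable section

/-- Basis of the twisted N=1 Schrodinger-Neveu-Schwarz algebra.
`L n` is L_n, `G k` is G_{k+1/2}, `Y p` is Y_{p/2}, `M p` is M_{p/2}, `C` is the central element. -/
inductive B : Type
  | L : ℤ → B
  | G : ℤ → B
  | Y : ℤ → B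
  | M : ℤ → B
  | C : B
deriving DecidableEq

/-- The underlying vector space of tsns. -/
abbrev V := B →₀ ℂ

/-- Basis vectors. -/
def e (x : B) : V := Finsupp.single x 1

/-- Parity of a basis element. -/
def isOdd : B → Bool
  | .G _ => true
  | .Y p => if p % 2 = 0 then false else true
  | .M p => if p % 2 = 0 then false else true
  | _ => false

/-- The Koszul sign (-1)^{|x||y|}. -/
def sgn (x y : B) : ℂ := if isOdd x && isOdd y then -1 else 1

/-- The super-bracket on basis elements of tsns. -/
def bb : B → B → V
  | .L n, .L m => ((m : ℂ) - n) • e (.L (n+m)) +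
      (if m = -n then (((n:ℂ)^3 - (n:ℂ))/12) • e B.C else 0)
  | .L n, .G k => ((k : ℂ) + 1/2 - (n:ℂ)/2) • e (.G (k+n))
  | .G k, .L n => (-((k : ℂ) + 1/2 - (n:ℂ)/2)) • e (.G (k+n))
  | .G k, .G l => (2:ℂ) • e (.L (k+l+1)) +
      (if l = -k-1 then ((1 - 4*((k:ℂ)+1/2)^2)/12) • e B.C else 0)
  | .L n, .Y p => (if p % 2 = 0 then (p:ℂ)/2 - (n:ℂ)/2 else (p:ℂ)/2) • e (.Y (p + 2*n))
  | .Y p, .L n => (-(if p % 2 = 0 then (p:ℂ)/2 - (n:ℂ)/2 else (p:ℂ)/2)) • e (.Y (p + 2*n))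
  | .L n, .M p => (if p % 2 = 0 then (p:ℂ)/2 else (p:ℂ)/2 + (n:ℂ)/2) • e (.M (p + 2*n))
  | .M p, .L n => (-(if p % 2 = 0 then (p:ℂ)/2 else (p:ℂ)/2 + (n:ℂ)/2)) • e (.M (p + 2*n))
  | .G k, .Y p => (if p % 2 = 0 then ((p:ℂ)/2 - ((k:ℂ)+1/2))/2 else 2) • e (.Y (p + 2*k + 1))
  | .Y p, .G k => (if p % 2 = 0 then -(((p:ℂ)/2 - ((k:ℂ)+1/2))/2) else 2) • e (.Y (p + 2*k + 1))
  | .G k, .M p => (if p % 2 = 0 then (p:ℂ)/4 else 2) • e (.M (p + 2*k + 1))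
  | .M p, .G k => (if p % 2 = 0 then -((p:ℂ)/4) else 2) • e (.M (p + 2*k + 1))
  | .Y p, .Y q => (if p % 2 = 0 then (if q % 2 = 0 then ((q:ℂ) - p)/4 else (q:ℂ)/4)
      else (if q % 2 = 0 then -((p:ℂ)/4) else 2)) • e (.M (p + q))
  | _, _ => 0

/-- Bilinear extension of the bracket to all of tsns. -/
def br (f g : V) : V := f.sum fun x a => g.sum fun y b => (a * b) • bb x y

/-- Linear extension of an assignment of operators to basis elements. -/
def ext {W : Type} [AddCommGroup W] [Module ℂ W] (ρ : B → Module.End ℂ W) (f : V) :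
    Module.End ℂ W := f.sum fun x a => a • ρ x

/-- A module (representation) over the twisted N=1 Schrodinger-Neveu-Schwarz algebra. -/
structure TsnsRep (W : Type) [AddCommGroup W] [Module ℂ W] where
  ρ : B → Module.End ℂ W
  compat : ∀ x y : B, ext ρ (bb x y) = ρ x * ρ y - sgn x y • (ρ y * ρ x)

/-- Simplicity (irreducibility) of a tsns-module. -/
def TsnsSimple {W : Type} [AddCommGroup W] [Module ℂ W] (r : TsnsRep W) : Prop :=
  (∃ w : W, w ≠ 0) ∧
    ∀ U : Submodule ℂ W, (∀ x : B, ∀ u ∈ U, r.ρ x u ∈ U) → U = ⊥ ∨ U = ⊤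


section AuxHelpers

variable {W : Type} [AddCommGroup W] [Module ℂ W]

lemma ext_smul_e (ρ : B → Module.End ℂ W) (a : ℂ) (x : B) :
    ext ρ (a • e x) = a • ρ x := by
  unfold ext e
  rw [Finsupp.smul_single, smul_eq_mul, mul_one, Finsupp.sum_single_index (by simp)]

lemma stepY (r : TsnsRep W) (v : W) (hL : r.ρ (.L (-1)) v = 0)
    (p : ℤ) (h : r.ρ (.Y p) v = 0) : r.ρ (.Y (p - 2)) v = 0 := by
  have hc := r.compat (.L (-1)) (.Y p)
  simp only [bb, ext_smul_e, sgn, isOdd, Bool.false_and, if_neg (by simp : ¬False), one_smul] at hc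
  have hidx : p + 2 * (-1) = p - 2 := by ring
  rw [hidx] at hc
  have happ := congrArg (fun f : Module.End ℂ W => f v) hc
  simp only [LinearMap.smul_apply, LinearMap.sub_apply, Module.End.mul_apply, h, hL,
    map_zero, sub_zero, smul_zero, sgn, isOdd, Bool.false_and, Bool.false_eq_true,
    if_false, one_smul] at happ
  have hcoef : (if p % 2 = 0 then (p : ℂ) / 2 - ((-1 : ℤ) : ℂ) / 2 else (p : ℂ) / 2) ≠ 0 := by
    split_ifs with hpar
    · have hp : p ≠ -1 := by omega
      have hp' : (p : ℂ) ≠ -1 := by exact_mod_cast hp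
      intro hcon
      apply hp'
      push_cast at hcon ⊢
      linear_combination 2 * hcon
    · have hp : p ≠ 0 := by omega
      have hp' : (p : ℂ) ≠ 0 := by exact_mod_cast hp
      intro hcon
      apply hp'
      linear_combination 2 * hcon
  exact (smul_eq_zero.mp happ).resolve_left hcoef

lemma stepM (r : TsnsRep W) (v : W) (hL : r.ρ (.L (-1)) v = 0)
    (p : ℤ) (hp0 : p ≠ 0) (hp1 : p ≠ 1) (h : r.ρ (.M p) v = 0) :
    r.ρ (.M (p - 2)) v = 0 := by
  have hc := r.compat (.L (-1)) (.M p)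
  simp only [bb, ext_smul_e, sgn, isOdd, Bool.false_and, if_neg (by simp : ¬False), one_smul] at hc
  have hidx : p + 2 * (-1) = p - 2 := by ring
  rw [hidx] at hc
  have happ := congrArg (fun f : Module.End ℂ W => f v) hc
  simp only [LinearMap.smul_apply, LinearMap.sub_apply, Module.End.mul_apply, h, hL,
    map_zero, sub_zero, smul_zero, sgn, isOdd, Bool.false_and, Bool.false_eq_true,
    if_false, one_smul] at happ
  have hcoef : (if p % 2 = 0 then (p : ℂ) / 2 else (p : ℂ) / 2 + ((-1 : ℤ) : ℂ) / 2) ≠ 0 := by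
    split_ifs with hpar
    · have hp' : (p : ℂ) ≠ 0 := by exact_mod_cast hp0
      intro hcon; apply hp'; linear_combination 2 * hcon
    · have hp' : (p : ℂ) ≠ 1 := by exact_mod_cast hp1
      intro hcon; apply hp'; push_cast at hcon ⊢; linear_combination 2 * hcon
  exact (smul_eq_zero.mp happ).resolve_left hcoef

lemma yyM (r : TsnsRep W) (v : W) (p q : ℤ)
    (hp : r.ρ (.Y p) v = 0) (hq : r.ρ (.Y q) v = 0)
    (hcoef : (if p % 2 = 0 then (if q % 2 = 0 then ((q : ℂ) - p) / 4 else (q : ℂ) / 4)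
      else (if q % 2 = 0 then -((p : ℂ) / 4) else 2)) ≠ 0) :
    r.ρ (.M (p + q)) v = 0 := by
  have hc := r.compat (.Y p) (.Y q)
  simp only [bb, ext_smul_e] at hc
  have happ := congrArg (fun f : Module.End ℂ W => f v) hc
  simp only [LinearMap.smul_apply, LinearMap.sub_apply, Module.End.mul_apply, hp, hq,
    map_zero, sub_zero, smul_zero] at happ
  exact (smul_eq_zero.mp happ).resolve_left hcoef

end AuxHelpers

/-- if L_{-1}v = Y_{-1}v = M_{-1}v = 0 and Y_p v = M_p v = 0 for all
positive p ∈ (1/2)ℤ, then Y_p v = M_p v = 0 for all p ∈ (1/2)ℤ. -/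
theorem all_YM_kill_of_pos {W : Type} [AddCommGroup W] [Module ℂ W] (r : TsnsRep W)
    (v : W) (hL : r.ρ (.L (-1)) v = 0) (hY : r.ρ (.Y (-2)) v = 0)
    (hM : r.ρ (.M (-2)) v = 0)
    (hpos : ∀ p : ℤ, 0 < p → r.ρ (.Y p) v = 0 ∧ r.ρ (.M p) v = 0) :
    ∀ p : ℤ, r.ρ (.Y p) v = 0 ∧ r.ρ (.M p) v = 0 := by
  have allY : ∀ p : ℤ, r.ρ (.Y p) v = 0 := by
    have key : ∀ n : ℕ, ∀ p : ℤ, 0 < p + n → r.ρ (.Y p) v = 0 := by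
      intro n
      induction n with
      | zero => intro p hp; exact (hpos p (by omega)).1
      | succ n ih =>
        intro p hp
        by_cases h : 0 < p + (n : ℤ)
        · exact ih p h
        · have h2 : r.ρ (.Y (p + 2)) v = 0 := ih (p + 2) (by omega)
          have := stepY r v hL (p + 2) h2
          simpa using this
    intro p
    exact key (1 - p).toNat p (by omega)
  have m0 : r.ρ (.M 0) v = 0 := by
    have := yyM r v 2 (-2) (allY 2) (allY (-2)) (by norm_num)
    simpa using this
  have m1 : r.ρ (.M (-1)) v = 0 := by
    have := yyM r v 1 (-2) (allY 1) (allY (-2)) (by norm_num)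
    simpa using this
  have allM : ∀ p : ℤ, r.ρ (.M p) v = 0 := by
    have key : ∀ n : ℕ, ∀ p : ℤ, -2 ≤ p + n → r.ρ (.M p) v = 0 := by
      intro n
      induction n with
      | zero =>
        intro p hp
        by_cases h : 0 < p
        · exact (hpos p h).2
        · obtain ⟨h1, h2⟩ : -2 ≤ p ∧ p ≤ 0 := by omega
          interval_cases p
          · exact hM
          · exact m1
          · exact m0
      | succ n ih =>
        intro p hp
        by_cases h : -2 ≤ p + (n : ℤ)
        · exact ih p h
        · have h2 : r.ρ (.M (p + 2)) v = 0 := ih (p + 2) (by omega)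
          have := stepM r v hL (p + 2) (by omega) (by omega) h2
          simpa using this
    intro p
    exact key (-2 - p).toNat p (by omega)
  exact fun p => ⟨allY p, allM p⟩
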